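/- arXiv:1903.05303 — 3 statements merged into one kernel-verified Lean document; each statement's English description precedes it below -/
import Mathlib

section
/- Let ρ = Σᵢ aᵢ |ψᵢ⟩⟨ψᵢ| be a density operator written in an orthonormal eigendecomposition with weights aᵢ ≥ 0 summing to 1, and let H be a Hermitian operator with maximum eigenvalue C_q. Suppose ε₁, ε₂ are reals with 0 ≤ ε₁ < ε₂, Tr(ρH) ≥ C_q − ε₁, and suppose for every index i with ⟨ψᵢ|H|ψᵢ⟩ ≥ C_q − ε₁ and every j ≠ i, ⟨ψⱼ|H|ψⱼ⟩ ≤ C_q − ε₂. Then there exists an index i₁ with a_{i₁} ≥ 1 − ε₁/ε₂. -/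
/-! Each `⟨ψᵢ|H|ψᵢ⟩` is at most `C_q`, and `Tr(ρH) = ∑ aᵢ ⟨ψᵢ|H|ψᵢ⟩` is a weighted mean of these
numbers, so the largest of them, at `i₁`, is at least `C_q - ε₁`. All the others are then at most
`C_q - ε₂`, whence `C_q - ε₁ ≤ Tr(ρH) ≤ C_q - (1 - a_{i₁}) ε₂`. -/

open Matrix

open scoped MatrixOrder ComplexOrder in
theorem Matrix.IsHermitian.re_dotProduct_mulVec_le {𝕜 n : Type*} [RCLike 𝕜] [Fintype n]
    [DecidableEq n] {A : Matrix n n 𝕜} (hA : A.IsHermitian) {c : ℝ}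
    (hc : ∀ i, hA.eigenvalues i ≤ c) (v : n → 𝕜) :
    RCLike.re (star v ⬝ᵥ (A *ᵥ v)) ≤ c * RCLike.re (star v ⬝ᵥ v) := by
  have hle : A ≤ algebraMap ℝ _ c := le_algebraMap_of_spectrum_le (by
    rintro x hx
    obtain ⟨i, rfl⟩ := hA.spectrum_real_eq_range_eigenvalues ▸ hx
    exact hc i)
  have hnonneg := RCLike.nonneg_iff.mp ((le_iff.mp hle).dotProduct_mulVec_nonneg v)
  simpa [sub_mulVec, dotProduct_sub, Algebra.algebraMap_eq_smul_one, smul_mulVec,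
    dotProduct_smul, RCLike.smul_re] using hnonneg.1

theorem Matrix.trace_vecMulVec_mul {R n : Type*} [CommSemiring R] [Fintype n]
    (u w : n → R) (M : Matrix n n R) : trace (vecMulVec u w * M) = w ⬝ᵥ (M *ᵥ u) := by
  rw [vecMulVec_mul, trace_vecMulVec, dotProduct_comm, dotProduct_mulVec]

theorem weighted_sum_le_of_le {ι : Type*} [Fintype ι] {a x : ι → ℝ} {c : ℝ}
    (ha : ∀ i, 0 ≤ a i) (hsum : ∑ i, a i = 1) (hx : ∀ i, x i ≤ c) :
    ∑ i, a i * x i ≤ c :=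
  calc ∑ i, a i * x i ≤ ∑ i, a i * c := by gcongr with i; exacts [ha i, hx i]
    _ = c := by rw [← Finset.sum_mul, hsum, one_mul]

theorem exists_one_sub_div_le_of_gap {ι : Type*} [Fintype ι] {a x : ι → ℝ} {C ε₁ ε₂ : ℝ}
    (ha : ∀ i, 0 ≤ a i) (hsum : ∑ i, a i = 1) (hx : ∀ i, x i ≤ C)
    (hmean : C - ε₁ ≤ ∑ i, a i * x i) (hε : ε₁ < ε₂)
    (hgap : ∀ i, C - ε₁ ≤ x i → ∀ j, j ≠ i → x j ≤ C - ε₂) :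
    ∃ i, 1 - ε₁ / ε₂ ≤ a i := by
  classical
  have hε₂ : 0 < ε₂ := by linarith [weighted_sum_le_of_le ha hsum hx]
  have hne : (Finset.univ : Finset ι).Nonempty :=
    Finset.nonempty_of_sum_ne_zero (hsum ▸ one_ne_zero)
  obtain ⟨i, -, hmax⟩ := Finset.exists_max_image Finset.univ x hne
  have hxi : C - ε₁ ≤ x i :=
    hmean.trans (weighted_sum_le_of_le ha hsum fun j => hmax j (Finset.mem_univ j))
  have hpoint : ∀ j, x j ≤ C - ε₂ + if j = i then ε₂ else 0 := by
    intro j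
    split_ifs with hji
    · linarith [hx j]
    · linarith [hgap i hxi j hji]
  have hupper : ∑ j, a j * x j ≤ C - ε₂ + a i * ε₂ :=
    calc ∑ j, a j * x j ≤ ∑ j, a j * (C - ε₂ + if j = i then ε₂ else 0) := by
          gcongr with j; exacts [ha j, hpoint j]
      _ = C - ε₂ + a i * ε₂ := by
          simp only [mul_add, Finset.sum_add_distrib, ← Finset.sum_mul, hsum, one_mul, mul_ite,
            mul_zero, Finset.sum_ite_eq', Finset.mem_univ, if_true]
  refine ⟨i, ?_⟩
  rw [sub_le_comm, le_div_iff₀ hε₂]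
  linarith

theorem stmt_5_general {n : ℕ} (H ρ : Matrix (Fin n) (Fin n) ℂ)
    (hH : H.IsHermitian)
    (Cq : ℝ) (hCq : IsGreatest (Set.range hH.eigenvalues) Cq)
    (a : Fin n → ℝ) (ha : ∀ i, 0 ≤ a i) (hsum : ∑ i, a i = 1)
    (ψ : Fin n → (Fin n → ℂ))
    (horth : ∀ i j, star (ψ i) ⬝ᵥ ψ j = if i = j then 1 else 0)
    (hρ : ρ = ∑ i, (a i : ℂ) • vecMulVec (ψ i) (star (ψ i)))
    (ε₁ ε₂ : ℝ) (hε : ε₁ < ε₂)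
    (htr : Cq - ε₁ ≤ ((ρ * H).trace).re)
    (hnd : ∀ i, Cq - ε₁ ≤ (star (ψ i) ⬝ᵥ (H *ᵥ ψ i)).re →
      ∀ j, j ≠ i → (star (ψ j) ⬝ᵥ (H *ᵥ ψ j)).re ≤ Cq - ε₂) :
    ∃ i₁, 1 - ε₁ / ε₂ ≤ a i₁ := by
  have hrayleigh : ∀ i, (star (ψ i) ⬝ᵥ (H *ᵥ ψ i)).re ≤ Cq := fun i => by
    simpa [horth] using hH.re_dotProduct_mulVec_le (fun j => hCq.2 ⟨j, rfl⟩) (ψ i)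
  have htrace : ((ρ * H).trace).re = ∑ i, a i * (star (ψ i) ⬝ᵥ (H *ᵥ ψ i)).re := by
    simp [hρ, Finset.sum_mul, trace_sum, trace_vecMulVec_mul, Complex.re_sum]
  exact exists_one_sub_div_le_of_gap ha hsum hrayleigh (htrace ▸ htr) hε hnd

theorem stmt_5 {n : ℕ} (H ρ : Matrix (Fin n) (Fin n) ℂ)
    (hH : H.IsHermitian)
    (Cq : ℝ) (hCq : IsGreatest (Set.range hH.eigenvalues) Cq)
    (a : Fin n → ℝ) (ha : ∀ i, 0 ≤ a i) (hsum : ∑ i, a i = 1)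
    (ψ : Fin n → (Fin n → ℂ))
    (horth : ∀ i j, star (ψ i) ⬝ᵥ ψ j = if i = j then 1 else 0)
    (hρ : ρ = ∑ i, (a i : ℂ) • vecMulVec (ψ i) (star (ψ i)))
    (ε₁ ε₂ : ℝ) (hε₁ : 0 ≤ ε₁) (hε : ε₁ < ε₂)
    (htr : Cq - ε₁ ≤ ((ρ * H).trace).re)
    (hnd : ∀ i, Cq - ε₁ ≤ (star (ψ i) ⬝ᵥ (H *ᵥ ψ i)).re →
      ∀ j, j ≠ i → (star (ψ j) ⬝ᵥ (H *ᵥ ψ j)).re ≤ Cq - ε₂) :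
    ∃ i₁, 1 - ε₁ / ε₂ ≤ a i₁ :=
  stmt_5_general H ρ hH Cq hCq a ha hsum ψ horth hρ ε₁ ε₂ hε htr hnd
end

section
/- Let ψ, φ ∈ ℂ^d ⊗ ℂ^d be bipartite unit vectors both with Schmidt rank d. Then there exist α, β ∈ ℂ with αβ ≠ 0 such that αψ + βφ has Schmidt rank at most d−1. -/
open Matrix

/-- The Schmidt rank of a bipartite vector `ψ : ℂ^d ⊗ ℂ^d`, represented as a
function on index pairs: the minimal `r` such that `ψ = ∑ k < r, uₖ ⊗ vₖ`. -/
noncomputable def schmidtRank {d : ℕ} (ψ : Fin d × Fin d → ℂ) : ℕ :=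
  sInf {r : ℕ | ∃ u v : Fin r → (Fin d → ℂ), ∀ p, ψ p = ∑ k, u k p.1 * v k p.2}

/-- A singular `(n+1) × (n+1)` matrix admits a decomposition into `n` rank-one terms. -/
lemma decomp_of_det_eq_zero {n : ℕ} (M : Matrix (Fin (n+1)) (Fin (n+1)) ℂ)
    (h : M.det = 0) :
    ∃ u v : Fin n → (Fin (n+1) → ℂ), ∀ i j, M i j = ∑ k, u k i * v k j := by
  obtain ⟨c, hc, hcM⟩ := Matrix.exists_vecMul_eq_zero_iff.mpr h
  obtain ⟨i₀, hi₀⟩ := Function.ne_iff.mp hc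
  simp only [Pi.zero_apply] at hi₀
  refine ⟨fun k i => if i = i₀ then -(c (i₀.succAbove k) / c i₀)
      else (if i = i₀.succAbove k then 1 else 0),
    fun k j => M (i₀.succAbove k) j, ?_⟩
  intro i j
  beta_reduce
  rcases eq_or_ne i i₀ with rfl | hne
  · simp only [if_pos rfl, if_true, ite_true]
    have hsum := congrFun hcM j
    simp only [Matrix.vecMul, dotProduct, Pi.zero_apply] at hsum
    rw [Fin.sum_univ_succAbove (fun i' => c i' * M i' j) i] at hsum
    have hS : ∑ k, c (i.succAbove k) * M (i.succAbove k) j = -(c i * M i j) := by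
      linear_combination hsum
    have : ∑ k, -(c (i.succAbove k) / c i) * M (i.succAbove k) j
        = -((∑ k, c (i.succAbove k) * M (i.succAbove k) j) / c i) := by
      rw [Finset.sum_div, ← Finset.sum_neg_distrib]
      apply Finset.sum_congr rfl; intro k _; ring
    rw [this, hS]
    field_simp
  · obtain ⟨k₀, hk₀⟩ := Fin.exists_succAbove_eq hne
    rw [Finset.sum_eq_single k₀]
    · rw [if_neg hne, hk₀, if_pos rfl, one_mul]
    · intro k _ hk
      rw [if_neg hne, if_neg, zero_mul]
      intro hik
      exact hk (i₀.succAbove_right_injective (by rw [hk₀, hik]))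
    · intro habs; exact absurd (Finset.mem_univ k₀) habs

theorem stmt_11 {d : ℕ} (ψ φ : Fin d × Fin d → ℂ)
    (hψu : star ψ ⬝ᵥ ψ = 1) (hφu : star φ ⬝ᵥ φ = 1)
    (hψ : schmidtRank ψ = d) (hφ : schmidtRank φ = d) :
    ∃ α β : ℂ, α * β ≠ 0 ∧ schmidtRank (α • ψ + β • φ) ≤ d - 1 := by
  obtain _ | n := d
  · exfalso
    simp [dotProduct] at hψu
  set A : Matrix (Fin (n+1)) (Fin (n+1)) ℂ := Matrix.of fun i j => ψ (i, j) with hA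
  set B : Matrix (Fin (n+1)) (Fin (n+1)) ℂ := Matrix.of fun i j => φ (i, j) with hB
  -- A and B are invertible
  have hdetA : A.det ≠ 0 := by
    intro h
    obtain ⟨u, v, huv⟩ := decomp_of_det_eq_zero A h
    have : schmidtRank ψ ≤ n := Nat.sInf_le ⟨u, v, fun p => huv p.1 p.2⟩
    omega
  have hdetB : B.det ≠ 0 := by
    intro h
    obtain ⟨u, v, huv⟩ := decomp_of_det_eq_zero B h
    have : schmidtRank φ ≤ n := Nat.sInf_le ⟨u, v, fun p => huv p.1 p.2⟩
    omega
  -- take an eigenvalue of A⁻¹ * B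
  obtain ⟨μ, hμ⟩ := Module.End.exists_eigenvalue ((A⁻¹ * B).mulVecLin)
  obtain ⟨x, hx⟩ := hμ.exists_hasEigenvector
  have hx0 : x ≠ 0 := hx.2
  have hxe' : (A⁻¹ * B).mulVec x = μ • x := by
    have := hx.apply_eq_smul
    rwa [Matrix.mulVecLin_apply] at this
  have hBx : B.mulVec x = μ • A.mulVec x := by
    have := congrArg (A.mulVec) hxe'
    rwa [Matrix.mulVec_mulVec, ← Matrix.mul_assoc, Matrix.mul_nonsing_inv A (Ne.isUnit hdetA),
      Matrix.one_mul, Matrix.mulVec_smul] at this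
  have hμ0 : μ ≠ 0 := by
    rintro rfl
    rw [zero_smul] at hBx
    exact hdetB (Matrix.exists_mulVec_eq_zero_iff.mp ⟨x, hx0, hBx⟩)
  refine ⟨1, -μ⁻¹, by simp [hμ0], ?_⟩
  have hdet0 : ((1 : ℂ) • A + (-μ⁻¹) • B).det = 0 := by
    apply Matrix.exists_mulVec_eq_zero_iff.mp
    refine ⟨x, hx0, ?_⟩
    rw [Matrix.add_mulVec, Matrix.smul_mulVec, Matrix.smul_mulVec, hBx,
      smul_smul, one_smul]
    rw [neg_mul, inv_mul_cancel₀ hμ0]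
    simp
  obtain ⟨u, v, huv⟩ := decomp_of_det_eq_zero _ hdet0
  apply Nat.sInf_le
  refine ⟨u, v, fun p => ?_⟩
  have := huv p.1 p.2
  simpa [hA, hB] using this
end

section
/- If a probability vector (p₁,p₂,p₃) satisfies p₁² + p₂² + p₃² ≤ γ with 1/3 ≤ γ ≤ 1/2, then its Shannon entropy satisfies H(p) ≥ −2·((1−α)/2)·log((1−α)/2) − α·log α, where α = 1/3 − √((2/3)(γ − 1/3)). -/
open Real Set

lemma two_log_le {y : ℝ} (hy : 1 ≤ y) : 2 * Real.log y ≤ y - 1/y := by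
  have key : ∀ x : ℝ, x ∈ Set.Ici (1:ℝ) →
      HasDerivAt (fun y : ℝ => y - 1/y - 2 * Real.log y) (1 + 1/x^2 - 2/x) x := by
    intro x hx
    have hx0 : x ≠ 0 := by simp only [Set.mem_Ici] at hx; positivity
    have h1 : HasDerivAt (fun y : ℝ => 1/y) (-(1/x^2)) x := by
      simpa [one_div] using (hasDerivAt_inv hx0)
    have h2 : HasDerivAt (fun y : ℝ => 2 * Real.log y) (2/x) x := by
      have := (Real.hasDerivAt_log hx0).const_mul (2:ℝ)
      simpa [div_eq_mul_inv] using this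
    have := ((hasDerivAt_id x).sub h1).sub h2
    exact this.congr_deriv (by ring)
  have hmono : MonotoneOn (fun y : ℝ => y - 1/y - 2 * Real.log y) (Set.Ici 1) := by
    apply monotoneOn_of_deriv_nonneg (convex_Ici 1)
    · exact fun x hx => (key x hx).continuousAt.continuousWithinAt
    · intro x hx
      rw [interior_Ici] at hx
      exact (key x (Set.mem_Ici.mpr (le_of_lt hx))).differentiableAt.differentiableWithinAt
    · intro x hx
      rw [interior_Ici] at hx
      rw [(key x (Set.mem_Ici.mpr (le_of_lt hx))).deriv]
      have hx0 : (0:ℝ) < x := lt_trans one_pos hx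
      have heq : 1 + 1/x^2 - 2/x = (x-1)^2/x^2 := by field_simp; ring
      rw [heq]
      positivity
  have h := hmono (Set.mem_Ici.mpr le_rfl) (Set.mem_Ici.mpr hy) hy
  simp only at h
  norm_num at h
  rw [one_div]
  linarith


open Real Set

lemma pointwise_bound (α b x₀ m C : ℝ) (hα0 : 0 ≤ α) (hαb : α < b) (hb1 : b ≤ 1)
    (hx₀0 : 0 < x₀) (hx₀b : x₀ ≤ b)
    (hm : m = -(Real.log b + 1) + b / x₀)
    (hφb : -(b * Real.log b) + b^2/(2*x₀) - (m*b + C) = 0)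
    (hφα : -(α * Real.log α) + α^2/(2*x₀) - (m*α + C) = 0)
    {t : ℝ} (ht1 : α ≤ t) (ht2 : t ≤ 1) :
    0 ≤ -(t * Real.log t) + t^2/(2*x₀) - (m*t + C) := by
  set φ : ℝ → ℝ := fun u => -(u * Real.log u) + u^2/(2*x₀) - (m*u + C) with hφdef
  set ψ : ℝ → ℝ := fun u => -(Real.log u + 1) + u/x₀ - m with hψdef
  have hb0 : 0 < b := lt_of_le_of_lt hα0 hαb
  have hd : ∀ u : ℝ, u ≠ 0 → HasDerivAt φ (ψ u) u := by
    intro u hu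
    rw [hφdef, hψdef]
    have h1 := (Real.hasDerivAt_mul_log hu).neg
    have h2 : HasDerivAt (fun u : ℝ => u^2/(2*x₀)) (u/x₀) u := by
      have h := (hasDerivAt_pow 2 u).div_const (2*x₀)
      have : (x₀ : ℝ) ≠ 0 := ne_of_gt hx₀0
      exact h.congr_deriv (by push_cast; field_simp)
    have h3 : HasDerivAt (fun u : ℝ => m*u + C) m u := by
      simpa using ((hasDerivAt_id u).const_mul m).add_const C
    have h4 := (h1.add h2).sub h3
    exact h4
  have hdψ : ∀ u : ℝ, u ≠ 0 → HasDerivAt ψ (1/x₀ - 1/u) u := by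
    intro u hu
    rw [hψdef]
    have h1 := ((Real.hasDerivAt_log hu).add_const 1).neg
    have h2 : HasDerivAt (fun u : ℝ => u/x₀ - m) (1/x₀) u := by
      simpa using ((hasDerivAt_id u).div_const x₀).sub_const m
    have h4 := h1.add h2
    have heq : (fun u : ℝ => -(Real.log u + 1) + u / x₀ - m)
        = (fun x : ℝ => -(Real.log x + 1) + (x / x₀ - m)) := by funext x; ring
    have hval : 1/x₀ - 1/u = -u⁻¹ + 1/x₀ := by ring
    rw [heq, hval]
    exact h4
  have hψb : ψ b = 0 := by rw [hψdef]; dsimp only; rw [hm]; ring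
  have hcont : Continuous φ := by
    rw [hφdef]
    apply Continuous.sub
    · exact (Real.continuous_mul_log.neg).add ((continuous_pow 2).div_const _)
    · continuity
  have hψmono : MonotoneOn ψ (Set.Icc x₀ 1) := by
    apply monotoneOn_of_deriv_nonneg (convex_Icc _ _)
    · exact fun u hu => (hdψ u (ne_of_gt (lt_of_lt_of_le hx₀0 hu.1))).continuousAt.continuousWithinAt
    · rw [interior_Icc]
      exact fun u hu => (hdψ u (ne_of_gt (lt_trans hx₀0 hu.1))).differentiableAt.differentiableWithinAt
    · rw [interior_Icc]
      intro u hu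
      rw [(hdψ u (ne_of_gt (lt_trans hx₀0 hu.1))).deriv]
      have : 1/u ≤ 1/x₀ := one_div_le_one_div_of_le hx₀0 (le_of_lt hu.1)
      linarith
  have hψanti : AntitoneOn ψ (Set.Ioc 0 x₀) := by
    apply antitoneOn_of_deriv_nonpos (convex_Ioc _ _)
    · exact fun u hu => (hdψ u (ne_of_gt hu.1)).continuousAt.continuousWithinAt
    · rw [interior_Ioc]
      exact fun u hu => (hdψ u (ne_of_gt hu.1)).differentiableAt.differentiableWithinAt
    · rw [interior_Ioc]
      intro u hu
      rw [(hdψ u (ne_of_gt hu.1)).deriv]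
      have : 1/x₀ ≤ 1/u := one_div_le_one_div_of_le hu.1 (le_of_lt hu.2)
      linarith
  have hφb0 : φ b = 0 := by rw [hφdef]; exact hφb
  have hφα0 : φ α = 0 := by rw [hφdef]; exact hφα
  have hφanti : AntitoneOn φ (Set.Icc x₀ b) := by
    apply antitoneOn_of_deriv_nonpos (convex_Icc _ _) hcont.continuousOn
    · rw [interior_Icc]
      exact fun u hu => (hd u (ne_of_gt (lt_trans hx₀0 hu.1))).differentiableAt.differentiableWithinAt
    · rw [interior_Icc]
      intro u hu
      rw [(hd u (ne_of_gt (lt_trans hx₀0 hu.1))).deriv]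
      have h := hψmono (Set.mem_Icc.mpr ⟨le_of_lt hu.1, le_trans (le_of_lt hu.2) hb1⟩)
        (Set.mem_Icc.mpr ⟨hx₀b, hb1⟩) (le_of_lt hu.2)
      rw [hψb] at h; exact h
  have hφx₀ : 0 ≤ φ x₀ := by
    have h := hφanti (Set.mem_Icc.mpr ⟨le_refl _, hx₀b⟩) (Set.mem_Icc.mpr ⟨hx₀b, le_refl _⟩) hx₀b
    rw [hφb0] at h; exact h
  suffices hfin : 0 ≤ φ t by rw [hφdef] at hfin; exact hfin
  rcases le_or_gt b t with hbt | htb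
  · have hmonoφ : MonotoneOn φ (Set.Icc b 1) := by
      apply monotoneOn_of_deriv_nonneg (convex_Icc _ _) hcont.continuousOn
      · rw [interior_Icc]
        exact fun u hu => (hd u (ne_of_gt (lt_trans hb0 hu.1))).differentiableAt.differentiableWithinAt
      · rw [interior_Icc]
        intro u hu
        rw [(hd u (ne_of_gt (lt_trans hb0 hu.1))).deriv]
        have h := hψmono (Set.mem_Icc.mpr ⟨hx₀b, hb1⟩)
          (Set.mem_Icc.mpr ⟨le_trans hx₀b (le_of_lt hu.1), le_of_lt hu.2⟩) (le_of_lt hu.1)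
        rw [hψb] at h; exact h
    have h := hmonoφ (Set.mem_Icc.mpr ⟨le_refl _, hb1⟩) (Set.mem_Icc.mpr ⟨hbt, ht2⟩) hbt
    rw [hφb0] at h; exact h
  · rcases le_or_gt x₀ t with hx₀t | htx₀
    · have h := hφanti (Set.mem_Icc.mpr ⟨hx₀t, le_of_lt htb⟩)
        (Set.mem_Icc.mpr ⟨hx₀b, le_refl _⟩) (le_of_lt htb)
      rw [hφb0] at h; exact h
    · rcases eq_or_lt_of_le ht1 with hteq | htα
      · rw [← hteq, hφα0]
      · have ht0 : 0 < t := lt_of_le_of_lt hα0 htα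
        rcases le_or_gt 0 (ψ t) with hψt | hψt
        · have hmono2 : MonotoneOn φ (Set.Icc α t) := by
            apply monotoneOn_of_deriv_nonneg (convex_Icc _ _) hcont.continuousOn
            · rw [interior_Icc]
              exact fun u hu => (hd u (ne_of_gt (lt_of_le_of_lt hα0 hu.1))).differentiableAt.differentiableWithinAt
            · rw [interior_Icc]
              intro u hu
              rw [(hd u (ne_of_gt (lt_of_le_of_lt hα0 hu.1))).deriv]
              have h := hψanti (Set.mem_Ioc.mpr ⟨lt_of_le_of_lt hα0 hu.1, le_of_lt (lt_trans hu.2 htx₀)⟩)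
                (Set.mem_Ioc.mpr ⟨ht0, le_of_lt htx₀⟩) (le_of_lt hu.2)
              linarith
          have h := hmono2 (Set.mem_Icc.mpr ⟨le_refl _, le_of_lt htα⟩)
            (Set.mem_Icc.mpr ⟨le_of_lt htα, le_refl _⟩) (le_of_lt htα)
          rw [hφα0] at h; exact h
        · have hanti2 : AntitoneOn φ (Set.Icc t x₀) := by
            apply antitoneOn_of_deriv_nonpos (convex_Icc _ _) hcont.continuousOn
            · rw [interior_Icc]
              exact fun u hu => (hd u (ne_of_gt (lt_trans ht0 hu.1))).differentiableAt.differentiableWithinAt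
            · rw [interior_Icc]
              intro u hu
              rw [(hd u (ne_of_gt (lt_trans ht0 hu.1))).deriv]
              have h := hψanti (Set.mem_Ioc.mpr ⟨ht0, le_of_lt htx₀⟩)
                (Set.mem_Ioc.mpr ⟨lt_trans ht0 hu.1, le_of_lt hu.2⟩) (le_of_lt hu.1)
              linarith
          have h := hanti2 (Set.mem_Icc.mpr ⟨le_refl _, le_of_lt htx₀⟩)
            (Set.mem_Icc.mpr ⟨le_of_lt htx₀, le_refl _⟩) (le_of_lt htx₀)
          linarith [hφx₀]


open Real Set

lemma A_pos {α b : ℝ} (hα0 : 0 ≤ α) (hαb : α < b) :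
    0 < α * (Real.log α - Real.log b) + (b - α) := by
  have hb0 : 0 < b := lt_of_le_of_lt hα0 hαb
  rcases eq_or_lt_of_le hα0 with h0 | h0
  · rw [← h0]; simp; linarith
  · have hne1 : b/α ≠ 1 := by
      intro h
      rw [div_eq_one_iff_eq (ne_of_gt h0)] at h
      linarith
    have h1 : Real.log (b/α) < b/α - 1 := Real.log_lt_sub_one_of_pos (by positivity) hne1
    rw [Real.log_div (ne_of_gt hb0) (ne_of_gt h0)] at h1
    have h2 : α * (Real.log b - Real.log α) < α * (b/α - 1) :=
      mul_lt_mul_of_pos_left h1 h0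
    have h3 : α * (b/α - 1) = b - α := by field_simp
    linarith

lemma x0_le_b {α b : ℝ} (hα0 : 0 ≤ α) (hαb : α < b) :
    (b - α)^2 ≤ b * (2 * (α * (Real.log α - Real.log b) + (b - α))) := by
  have hb0 : 0 < b := lt_of_le_of_lt hα0 hαb
  rcases eq_or_lt_of_le hα0 with h0 | h0
  · rw [← h0]
    ring_nf
    nlinarith [sq_nonneg b]
  · have hy : 1 ≤ b/α := by rw [le_div_iff₀ h0]; linarith
    have hlog := two_log_le hy
    rw [Real.log_div (ne_of_gt hb0) (ne_of_gt h0)] at hlog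
    have hmul := mul_le_mul_of_nonneg_left hlog (le_of_lt (mul_pos h0 hb0))
    have hid : α * b * (b/α - 1/(b/α)) = b^2 - α^2 := by
      rw [one_div_div]; field_simp
    have hmul2 : α * b * (2*(Real.log b - Real.log α)) ≤ b^2 - α^2 := by
      calc α * b * (2*(Real.log b - Real.log α)) ≤ α * b * (b/α - 1/(b/α)) := hmul
      _ = b^2 - α^2 := hid
    linarith [hmul2]

lemma entry_lb {t u v γ s : ℝ} (hsum : t + u + v = 1)
    (hpur : t^2 + u^2 + v^2 ≤ γ) (hs2 : s^2 = 2/3*(γ - 1/3)) (hspos : 0 < s) :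
    1/3 - s ≤ t := by
  nlinarith [sq_nonneg (u - v), hs2, hspos, hpur, hsum]


set_option maxHeartbeats 800000 in
lemma phi_alpha {α b A x₀ m C : ℝ} (hbne : b - α ≠ 0) (hAne : A ≠ 0) (hx₀ne : x₀ ≠ 0)
    (hAdef : A = α * (Real.log α - Real.log b) + (b - α))
    (hx₀def : x₀ = (b - α)^2/(2*A))
    (hmdef : m = -(Real.log b + 1) + b / x₀)
    (hCdef : C = -(b * Real.log b) + b^2/(2*x₀) - m*b) :
    -(α * Real.log α) + α^2/(2*x₀) - (m*α + C) = 0 := by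
  have hbne2 : (b - α)^2 ≠ 0 := pow_ne_zero _ hbne
  have h2 : (b - α)^2/(2*x₀) = A := by
    rw [hx₀def]
    field_simp
  have h3 : -(α * Real.log α) + α^2/(2*x₀) - (m*α + C)
      = -A + (b - α)^2/(2*x₀) := by
    rw [hCdef, hmdef, hAdef]
    field_simp
    ring
  rw [h3, h2]
  ring


set_option maxHeartbeats 1000000 in
lemma main_case {p0 p1 p2 γ s α : ℝ}
    (hp0 : 0 ≤ p0) (hp1 : 0 ≤ p1) (hp2 : 0 ≤ p2)
    (hsum : p0 + p1 + p2 = 1) (hpur : p0^2 + p1^2 + p2^2 ≤ γ)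
    (hs2 : s^2 = 2/3*(γ - 1/3)) (hspos : 0 < s) (hs13 : s ≤ 1/3)
    (hα : α = 1/3 - s) :
    -2 * ((1 - α) / 2) * Real.log ((1 - α) / 2) - α * Real.log α ≤
      -(p0 * Real.log p0 + p1 * Real.log p1 + p2 * Real.log p2) := by
  have hα0 : 0 ≤ α := by rw [hα]; linarith
  have hα13 : α < 1/3 := by rw [hα]; linarith
  obtain ⟨b, hbdef⟩ : ∃ x : ℝ, x = (1 - α) / 2 := ⟨_, rfl⟩
  rw [show (1 - α) / 2 = b from hbdef.symm]
  have hαb : α < b := by rw [hbdef]; linarith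
  have hb0 : 0 < b := lt_of_le_of_lt hα0 hαb
  have hb2 : b ≤ 1/2 := by rw [hbdef]; linarith
  have hbne : b - α ≠ 0 := ne_of_gt (by linarith)
  obtain ⟨A, hAdef⟩ : ∃ x : ℝ, x = α * (Real.log α - Real.log b) + (b - α) := ⟨_, rfl⟩
  have hA0 : 0 < A := by rw [hAdef]; exact A_pos hα0 hαb
  have hAne : A ≠ 0 := ne_of_gt hA0
  obtain ⟨x₀, hx₀def⟩ : ∃ x : ℝ, x = (b - α)^2/(2*A) := ⟨_, rfl⟩
  have hx₀0 : 0 < x₀ := by rw [hx₀def]; exact div_pos (by positivity) (by linarith)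
  have hx₀ne : x₀ ≠ 0 := ne_of_gt hx₀0
  have hx₀b : x₀ ≤ b := by
    rw [hx₀def, div_le_iff₀ (by linarith)]
    rw [hAdef]
    exact x0_le_b hα0 hαb
  have hp0le : p0 ≤ 1 := by linarith
  have hp1le : p1 ≤ 1 := by linarith
  have hp2le : p2 ≤ 1 := by linarith
  obtain ⟨m, hmdef⟩ : ∃ x : ℝ, x = -(Real.log b + 1) + b / x₀ := ⟨_, rfl⟩
  obtain ⟨C, hCdef⟩ : ∃ x : ℝ, x = -(b * Real.log b) + b^2/(2*x₀) - m*b := ⟨_, rfl⟩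
  have hφb : -(b * Real.log b) + b^2/(2*x₀) - (m*b + C) = 0 := by rw [hCdef]; ring
  have hφα : -(α * Real.log α) + α^2/(2*x₀) - (m*α + C) = 0 :=
    phi_alpha hbne hAne hx₀ne hAdef hx₀def hmdef hCdef
  have ha0 : α ≤ p0 := by rw [hα]; exact entry_lb hsum hpur hs2 hspos
  have ha1 : α ≤ p1 := by
    rw [hα]
    exact entry_lb (by linarith : p1 + p0 + p2 = 1) (by linarith) hs2 hspos
  have ha2 : α ≤ p2 := by
    rw [hα]
    exact entry_lb (by linarith : p2 + p0 + p1 = 1) (by linarith) hs2 hspos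
  have k0 := pointwise_bound α b x₀ m C hα0 hαb (by linarith) hx₀0 hx₀b hmdef hφb hφα ha0 hp0le
  have k1 := pointwise_bound α b x₀ m C hα0 hαb (by linarith) hx₀0 hx₀b hmdef hφb hφα ha1 hp1le
  have k2 := pointwise_bound α b x₀ m C hα0 hαb (by linarith) hx₀0 hx₀b hmdef hφb hφα ha2 hp2le
  have hq : 2*b^2 + α^2 = γ := by
    rw [hbdef, hα]; linear_combination (3/2) * hs2
  have hq2 : 2*(b^2/(2*x₀)) + α^2/(2*x₀) = γ/(2*x₀) := by rw [← hq]; ring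
  have hpur2 : p0^2/(2*x₀) + p1^2/(2*x₀) + p2^2/(2*x₀) ≤ γ/(2*x₀) := by
    rw [← add_div, ← add_div]
    gcongr
  have hsum2 : 2*b + α = 1 := by rw [hbdef]; ring
  have hm1 : m*b + m*b + m*α = m := by linear_combination m * hsum2
  have hm2 : m*p0 + m*p1 + m*p2 = m := by linear_combination m * hsum
  linarith [k0, k1, k2, hφb, hφα, hq2, hpur2, hm1, hm2]

set_option maxHeartbeats 800000 in
theorem stmt_14 (p : Fin 3 → ℝ)
    (hp : ∀ i, 0 ≤ p i) (hsum : ∑ i, p i = 1)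
    (γ : ℝ) (hγl : 1 / 3 ≤ γ) (hγu : γ ≤ 1 / 2)
    (hpur : ∑ i, (p i) ^ 2 ≤ γ)
    (α : ℝ) (hα : α = 1 / 3 - Real.sqrt ((2 / 3) * (γ - 1 / 3))) :
    -2 * ((1 - α) / 2) * Real.log ((1 - α) / 2) - α * Real.log α ≤
      -∑ i, p i * Real.log (p i) := by
  have hs0 : 0 ≤ Real.sqrt ((2 / 3) * (γ - 1 / 3)) := Real.sqrt_nonneg _
  obtain ⟨s, hsdef⟩ : ∃ x : ℝ, x = Real.sqrt ((2 / 3) * (γ - 1 / 3)) := ⟨_, rfl⟩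
  rw [← hsdef] at hs0 hα
  have hs2 : s^2 = 2/3*(γ - 1/3) := by rw [hsdef]; exact Real.sq_sqrt (by linarith)
  have hs13 : s ≤ 1/3 := by nlinarith [sq_nonneg (s - 1/3)]
  simp only [Fin.sum_univ_three] at hsum hpur ⊢
  have hp0 := hp 0; have hp1 := hp 1; have hp2 := hp 2
  rcases eq_or_lt_of_le hs0 with hdeg | hspos
  · -- degenerate case γ = 1/3
    have hγ13 : γ = 1/3 := by
      have h := hs2; rw [← hdeg] at h; norm_num at h; linarith
    have e0 : p 0 = 1/3 := by
      have h2 : (p 0 - 1/3)^2 = 0 := le_antisymm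
        (by nlinarith [sq_nonneg (p 1 - 1/3), sq_nonneg (p 2 - 1/3)]) (sq_nonneg _)
      have h3 := pow_eq_zero_iff (two_ne_zero) |>.mp h2
      linarith
    have e1 : p 1 = 1/3 := by
      have h2 : (p 1 - 1/3)^2 = 0 := le_antisymm
        (by nlinarith [sq_nonneg (p 0 - 1/3), sq_nonneg (p 2 - 1/3)]) (sq_nonneg _)
      have h3 := pow_eq_zero_iff (two_ne_zero) |>.mp h2
      linarith
    have e2 : p 2 = 1/3 := by
      have h2 : (p 2 - 1/3)^2 = 0 := le_antisymm
        (by nlinarith [sq_nonneg (p 0 - 1/3), sq_nonneg (p 1 - 1/3)]) (sq_nonneg _)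
      have h3 := pow_eq_zero_iff (two_ne_zero) |>.mp h2
      linarith
    have hα13 : α = 1/3 := by rw [hα, ← hdeg]; norm_num
    rw [e0, e1, e2, hα13]
    have h13 : ((1:ℝ) - 1/3)/2 = 1/3 := by norm_num
    rw [h13]
    linarith
  · exact main_case hp0 hp1 hp2 hsum hpur hs2 hspos hs13 hα
end
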